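/- For every h ≥ 2, the largest odd number at height h is 3^{h−1}: H(3^{h−1}) = h, and every odd natural number n with H(n) = h satisfies n ≤ 3^{h−1}. -/

import Mathlib

/-- The height function: H(1) = 0 and H(n) = H(φ(n)) + 1 for n ≥ 2. -/
def H : ℕ → ℕ
  | 0 => 0
  | 1 => 0
  | n + 2 => H (Nat.totient (n + 2)) + 1
  decreasing_by exact Nat.totient_lt _ (by omega)

/-- The sum-of-heights function S(n) = ∑_{k=1}^n H(k). -/
def S (n : ℕ) : ℕ := ∑ k ∈ Finset.Icc 1 n, H k

/-
Since φ(3^(k+1)) = 2·3^k and doubling an odd number c ≥ 3 does not change its height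
(φ(2c) = φ(c)), one gets H(2·3^k) = k + 1 and hence H(3^k) = k + 1 for k ≥ 1.

For the bound we show 3u ≤ 3^H(2u) for every odd u, by strong induction. Write φ(u) = 2^j·c
with c odd. Each of the ω odd prime factors p of u contributes a factor p − 1 to φ(u), which is
even and at least 2p/3; hence ω ≤ j and u ≤ (3/2)^ω·φ(u) ≤ 3^j·c. On the other side,
doubling an even number raises the height by exactly one, so H(2u) = H(φ(u)) + 1 = H(2c) + j,
and the induction hypothesis 3c ≤ 3^H(2c) closes the step.
-/

open Nat Finset

lemma H_one : H 1 = 0 := by rw [H]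

lemma H_of_two_le {n : ℕ} (hn : 2 ≤ n) : H n = H (φ n) + 1 := by
  obtain ⟨k, rfl⟩ := Nat.exists_eq_add_of_le' hn
  rw [H]

lemma H_two : H 2 = 1 := by
  rw [H_of_two_le le_rfl, totient_two, H_one]

lemma H_two_mul_of_odd {c : ℕ} (hc : Odd c) (hc1 : c ≠ 1) : H (2 * c) = H c := by
  have hc3 : 3 ≤ c := by obtain ⟨r, rfl⟩ := hc; omega
  rw [H_of_two_le (by omega), totient_two_mul_of_odd hc, ← H_of_two_le (by omega)]

lemma H_two_mul_of_even {m : ℕ} (hm : Even m) (hm0 : m ≠ 0) : H (2 * m) = H m + 1 := by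
  induction m using Nat.strong_induction_on with
  | _ m ih =>
    rw [H_of_two_le (by omega), totient_two_mul_of_even hm]
    congr 1
    obtain rfl | hm2 : m = 2 ∨ 2 < m := by obtain ⟨r, rfl⟩ := hm; omega
    · rfl
    · rw [ih _ (totient_lt m (by omega)) (totient_even hm2) (totient_pos.2 (by omega)).ne',
        H_of_two_le hm2.le]

lemma H_two_pow_mul_of_even {m : ℕ} (hm : Even m) (hm0 : m ≠ 0) (k : ℕ) :
    H (2 ^ k * m) = H m + k := by
  induction k with
  | zero => simp
  | succ k ih =>
    rw [pow_succ', mul_assoc, H_two_mul_of_even (hm.mul_left _) (by positivity), ih, add_assoc]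

lemma H_two_mul_three_pow (k : ℕ) : H (2 * 3 ^ k) = k + 1 := by
  induction k with
  | zero => simpa using H_two
  | succ k ih =>
    rw [H_two_mul_of_odd (Odd.pow (by decide)) (by simp),
      H_of_two_le ((by norm_num : 2 ≤ 3).trans (Nat.le_self_pow k.succ_ne_zero 3)),
      totient_prime_pow_succ prime_three, mul_comm, ih]

lemma three_le_of_mem_primeFactors_of_odd {n p : ℕ} (hn : Odd n) (hp : p ∈ n.primeFactors) :
    3 ≤ p := by
  have h2 := (prime_of_mem_primeFactors hp).two_le
  have hp2 : p ≠ 2 := by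
    rintro rfl
    exact hn.not_two_dvd_nat (dvd_of_mem_primeFactors hp)
  omega

lemma two_pow_card_primeFactors_dvd_totient {n : ℕ} (hn : Odd n) :
    2 ^ #n.primeFactors ∣ φ n := by
  have h2 : ∀ p ∈ n.primeFactors, 2 ∣ p - 1 := fun p hp => by
    have := (prime_of_mem_primeFactors hp).eq_two_or_odd
    have := three_le_of_mem_primeFactors_of_odd hn hp
    omega
  calc 2 ^ #n.primeFactors = ∏ _p ∈ n.primeFactors, 2 := (prod_const 2).symm
    _ ∣ ∏ p ∈ n.primeFactors, (p - 1) := prod_dvd_prod_of_dvd _ _ h2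
    _ ∣ φ n := Dvd.intro_left _ (totient_eq_div_primeFactors_mul n).symm

lemma two_pow_card_primeFactors_mul_le {n : ℕ} (hn : Odd n) :
    2 ^ #n.primeFactors * n ≤ 3 ^ #n.primeFactors * φ n := by
  have hP : 0 < ∏ p ∈ n.primeFactors, p :=
    prod_pos fun p hp => (prime_of_mem_primeFactors hp).pos
  have hfactor : ∏ p ∈ n.primeFactors, 2 * p ≤ ∏ p ∈ n.primeFactors, 3 * (p - 1) :=
    prod_le_prod' fun p hp => by have := three_le_of_mem_primeFactors_of_odd hn hp; omega
  rw [prod_mul_distrib, prod_mul_distrib, prod_const, prod_const] at hfactor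
  refine Nat.le_of_mul_le_mul_right ?_ hP
  calc 2 ^ #n.primeFactors * n * ∏ p ∈ n.primeFactors, p
      = 2 ^ #n.primeFactors * (∏ p ∈ n.primeFactors, p) * n := by ring
    _ ≤ 3 ^ #n.primeFactors * (∏ p ∈ n.primeFactors, (p - 1)) * n := by gcongr
    _ = 3 ^ #n.primeFactors * φ n * ∏ p ∈ n.primeFactors, p := by
      rw [mul_assoc, mul_assoc, totient_mul_prod_primeFactors, mul_comm n]

lemma pow_mul_pow_le_pow_mul_pow {a b i j : ℕ} (hab : a ≤ b) (hij : i ≤ j) :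
    b ^ i * a ^ j ≤ a ^ i * b ^ j := by
  obtain ⟨d, rfl⟩ := Nat.exists_eq_add_of_le hij
  rw [pow_add, pow_add, mul_left_comm]
  exact Nat.mul_le_mul_left _ (Nat.mul_le_mul_left _ (Nat.pow_le_pow_left hab d))

lemma le_three_pow_mul_of_totient_eq {n j c : ℕ} (hn : Odd n) (hc : Odd c)
    (h : φ n = 2 ^ j * c) : n ≤ 3 ^ j * c := by
  have hω : #n.primeFactors ≤ j := by
    have hdvd := two_pow_card_primeFactors_dvd_totient hn
    rw [h] at hdvd
    exact (Nat.pow_dvd_pow_iff_le_right one_lt_two).1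
      ((Nat.Coprime.pow_left _ (coprime_two_left.2 hc)).dvd_of_dvd_mul_right hdvd)
  refine Nat.le_of_mul_le_mul_left ?_ (pow_pos two_pos #n.primeFactors)
  calc 2 ^ #n.primeFactors * n ≤ 3 ^ #n.primeFactors * φ n := two_pow_card_primeFactors_mul_le hn
    _ = 3 ^ #n.primeFactors * 2 ^ j * c := by rw [h, mul_assoc]
    _ ≤ 2 ^ #n.primeFactors * 3 ^ j * c :=
      Nat.mul_le_mul_right _ (pow_mul_pow_le_pow_mul_pow (by norm_num) hω)
    _ = 2 ^ #n.primeFactors * (3 ^ j * c) := mul_assoc _ _ _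

-- Phrased with H(2u) so that u = 1 (H 1 = 0 but H 2 = 1) satisfies the same bound.
lemma three_mul_le_three_pow_H_two_mul {u : ℕ} (hu : Odd u) : 3 * u ≤ 3 ^ H (2 * u) := by
  induction u using Nat.strong_induction_on with
  | _ u ih =>
    obtain rfl | hu3 : u = 1 ∨ 3 ≤ u := by obtain ⟨r, rfl⟩ := hu; omega
    · simp [H_two]
    obtain ⟨j, c, hc, hφ⟩ := exists_eq_two_pow_mul_odd (totient_pos.2 (by omega : 0 < u)).ne'
    obtain ⟨i, rfl⟩ : ∃ i, j = i + 1 := by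
      refine Nat.exists_eq_add_one.2 (Nat.pos_of_ne_zero fun hj => ?_)
      have := totient_even (n := u) (by omega)
      rw [hφ, hj, pow_zero, one_mul] at this
      exact (Nat.not_even_iff_odd.2 hc) this
    have hcu : c < u := calc
      c ≤ φ u := hφ ▸ Nat.le_mul_of_pos_left c (by positivity)
      _ < u := totient_lt u (by omega)
    have hH : H (2 * u) = H (2 * c) + (i + 1) := by
      rw [H_two_mul_of_odd hu (by omega), H_of_two_le (by omega), hφ, pow_succ, mul_assoc,
        H_two_pow_mul_of_even (even_two_mul c) (by simp [hc.pos.ne']), add_assoc]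
    calc 3 * u ≤ 3 * (3 ^ (i + 1) * c) := by
          gcongr; exact le_three_pow_mul_of_totient_eq hu hc hφ
      _ = 3 ^ (i + 1) * (3 * c) := by ring
      _ ≤ 3 ^ (i + 1) * 3 ^ H (2 * c) := by gcongr; exact ih c hcu hc
      _ = 3 ^ H (2 * u) := by rw [hH]; ring

theorem largest_odd_at_height (h : ℕ) (hh : 2 ≤ h) :
    H (3 ^ (h - 1)) = h ∧ ∀ n : ℕ, Odd n → H n = h → n ≤ 3 ^ (h - 1) := by
  obtain ⟨k, rfl⟩ : ∃ k, h = k + 2 := ⟨h - 2, by omega⟩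
  rw [show k + 2 - 1 = k + 1 by omega]
  refine ⟨?_, fun n hn hHn => ?_⟩
  · rw [← H_two_mul_of_odd (Odd.pow (by decide)) (by simp), H_two_mul_three_pow]
  · have hn1 : n ≠ 1 := by rintro rfl; simp [H_one] at hHn
    have := three_mul_le_three_pow_H_two_mul hn
    rw [H_two_mul_of_odd hn hn1, hHn, pow_succ'] at this
    omega
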